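/- Let p ∈ P₀([0,∞)) and q ∈ P₁([0,∞)). Then for any measurable f on a σ-finite measure space (Ω,μ) with μ(Ω) = ∞, the condition ∫₀^∞ t^{q(t)/p(t) − 1} (f*(t))^{q(t)} dt < ∞ holds if and only if ∫₀^1 t^{q(0)/p(0) − 1} (f*(t))^{q(t)} dt + ∫₁^∞ t^{q(∞)/p(∞) − 1} (f*(t))^{q(t)} dt < ∞. -/

import Mathlib

open MeasureTheory Filter Set Metric
open scoped ENNReal NNReal Topology

noncomputable section

/-- The non-increasing rearrangement `f*` of `f` with respect to the measure `μ`: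
`f*(t) = sup { s ≥ 0 : μ{|f| > s} > t }`. -/
def rearrange {α : Type*} [MeasurableSpace α] (μ : Measure α) (f : α → ℝ) (t : ℝ) : ℝ :=
  sSup {s : ℝ | 0 ≤ s ∧ ENNReal.ofReal t < μ {x | s < |f x|}}

/-- The maximal function of the rearrangement: `f**(t) = (1/t) ∫₀ᵗ f*(s) ds`. -/
def doubleStar {α : Type*} [MeasurableSpace α] (μ : Measure α) (f : α → ℝ) (t : ℝ) : ℝ :=
  (1 / t) * ∫ s in Ioo (0 : ℝ) t, rearrange μ f s

/-- The Luxemburg norm of `g` in the variable exponent Lebesgue space `L^{q(·)}([0,ℓ])`. -/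
def luxNorm (ℓ : ℝ≥0∞) (q : ℝ → ℝ) (g : ℝ → ℝ) : ℝ≥0∞ :=
  sInf {lam : ℝ≥0∞ | 0 < lam ∧
    (∫⁻ t in {t : ℝ | 0 < t ∧ ENNReal.ofReal t < ℓ},
      (ENNReal.ofReal |g t| / lam) ^ q t) ≤ 1}

/-- The class `P([0,ℓ])`: bounded measurable exponents with limits `p0` at `0` and
(if `ℓ = ∞`) `pinf` at `∞`, satisfying log-decay conditions at `0` and at `∞`. -/
structure ClassP (ℓ : ℝ≥0∞) (p : ℝ → ℝ) (p0 pinf : ℝ) : Prop where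
  measurable : Measurable p
  bounded : ∃ M : ℝ, ∀ t : ℝ, 0 ≤ t → ENNReal.ofReal t ≤ ℓ → |p t| ≤ M
  lim_zero : Tendsto p (nhdsWithin 0 (Ioi 0)) (nhds p0)
  decay_zero : ∃ C > 0, ∀ t : ℝ, 0 < t → t ≤ 1 / 2 → |p t - p0| ≤ C / Real.log (1 / t)
  lim_infty : ℓ = ∞ → Tendsto p atTop (nhds pinf)
  decay_infty : ℓ = ∞ → ∃ C > 0, ∀ t : ℝ, 0 ≤ t → |p t - pinf| ≤ C / Real.log (Real.exp 1 + t)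

/-- The class `P_a([0,ℓ]) = P([0,ℓ]) ∩ {p : a < p₋ ≤ p₊ < ∞}`. -/
def ClassPa (a : ℝ) (ℓ : ℝ≥0∞) (p : ℝ → ℝ) (p0 pinf : ℝ) : Prop :=
  ClassP ℓ p p0 pinf ∧
    ∃ pm pM : ℝ, a < pm ∧ ∀ t : ℝ, 0 ≤ t → ENNReal.ofReal t ≤ ℓ → pm ≤ p t ∧ p t ≤ pM

/-- The variable exponent Lorentz norm `‖f‖_{L^{p(·),q(·)}(Ω)}`. -/
def lorentzNorm {α : Type*} [MeasurableSpace α] (μ : Measure α) (p q : ℝ → ℝ)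
    (f : α → ℝ) : ℝ≥0∞ :=
  luxNorm (μ univ) q fun t => t ^ (1 / p t - 1 / q t) * rearrange μ f t

/-- The variable exponent Lorentz norm `‖f‖¹_{L^{p(·),q(·)}(Ω)}` defined via `f**`. -/
def lorentzNorm1 {α : Type*} [MeasurableSpace α] (μ : Measure α) (p q : ℝ → ℝ)
    (f : α → ℝ) : ℝ≥0∞ :=
  luxNorm (μ univ) q fun t => t ^ (1 / p t - 1 / q t) * doubleStar μ f t

/-- The weighted variable exponent Lorentz norm `‖f‖_{L^{p(·),q(·)}_w(Ω)}`. -/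
def wLorentzNorm {α : Type*} [MeasurableSpace α] (μ : Measure α) (w p q : ℝ → ℝ)
    (f : α → ℝ) : ℝ≥0∞ :=
  luxNorm (μ univ) q fun t => w t * t ^ (1 / p t - 1 / q t) * rearrange μ f t

/-- The weighted variable exponent Lorentz norm `‖f‖¹_{L^{p(·),q(·)}_w(Ω)}` via `f**`. -/
def wLorentzNorm1 {α : Type*} [MeasurableSpace α] (μ : Measure α) (w p q : ℝ → ℝ)
    (f : α → ℝ) : ℝ≥0∞ :=
  luxNorm (μ univ) q fun t => w t * t ^ (1 / p t - 1 / q t) * doubleStar μ f t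

/-- An ergodic flow `(T_τ)_{τ∈ℝ}` of measure preserving transformations on `(X,μ)`. -/
structure ErgodicFlow (X : Type*) [MeasurableSpace X] (μ : Measure X)
    (T : ℝ → X → X) : Prop where
  measurable : Measurable fun p : ℝ × X => T p.1 p.2
  preserving : ∀ τ : ℝ, MeasurePreserving (T τ) μ μ
  map_zero : ∀ x, T 0 x = x
  map_add : ∀ s t x, T (s + t) x = T s (T t x)
  ergodic : ∀ A : Set X, MeasurableSet A → (∀ τ, T τ ⁻¹' A = A) → μ A = 0 ∨ μ Aᶜ = 0

/-- The ergodic maximal function `Mf(x) = sup_{a>0} (1/a)∫₀^a |f(T_τ x)| dτ`. -/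
def ergMax {X : Type*} (T : ℝ → X → X) (f : X → ℝ) (x : X) : ℝ :=
  ⨆ a : {a : ℝ // 0 < a}, (1 / (a : ℝ)) * ∫ τ in Ioo (0 : ℝ) (a : ℝ), |f (T τ x)|

/-- The ergodic Hilbert transform
`Hf(x) = lim_{δ→0+} ∫_{δ ≤ |τ| ≤ 1/δ} f(T_τ x)/τ dτ`. -/
def ergHilbert {X : Type*} (T : ℝ → X → X) (f : X → ℝ) (x : X) : ℝ :=
  limUnder (nhdsWithin (0 : ℝ) (Ioi 0)) fun δ =>
    ∫ τ in {τ : ℝ | δ ≤ |τ| ∧ |τ| ≤ 1 / δ}, f (T τ x) / τ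


private lemma rpow_le_exp_mul {t α β B : ℝ} (ht : 0 < t)
    (h : |(α - β) * Real.log t| ≤ B) : t ^ α ≤ Real.exp B * t ^ β := by
  rw [Real.rpow_def_of_pos ht, Real.rpow_def_of_pos ht, ← Real.exp_add]
  apply Real.exp_le_exp.mpr
  have h1 : (α - β) * Real.log t ≤ B := (le_abs_self _).trans h
  have h2 : Real.log t * α = (α - β) * Real.log t + Real.log t * β := by ring
  linarith

private lemma key_ratio {qt pt c d L Cq Cp pm pM qM : ℝ}
    (hpm : 0 < pm) (hpt1 : pm ≤ pt) (hd1 : pm ≤ d) (hd2 : d ≤ pM)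
    (hc1 : 0 ≤ c) (hc2 : c ≤ qM) (hL : 0 < L)
    (hu : |qt - c| ≤ Cq / L) (hv : |pt - d| ≤ Cp / L) :
    |qt / pt - c / d| * L ≤ (Cq * pM + qM * Cp) / (pm * pm) := by
  have hpt0 : 0 < pt := hpm.trans_le hpt1
  have hd0 : 0 < d := hpm.trans_le hd1
  have hCqL : 0 ≤ Cq / L := (abs_nonneg _).trans hu
  have hCpL : 0 ≤ Cp / L := (abs_nonneg _).trans hv
  have hqMnn : 0 ≤ qM := hc1.trans hc2
  have hpMpos : 0 < pM := hpm.trans_le (hd1.trans hd2)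
  have hnum : |qt * d - pt * c| ≤ |qt - c| * d + c * |pt - d| := by
    have he : qt * d - pt * c = (qt - c) * d + c * (d - pt) := by ring
    rw [he]
    refine (abs_add_le _ _).trans (le_of_eq ?_)
    have h1 : |(qt - c) * d| = |qt - c| * d := by rw [abs_mul, abs_of_pos hd0]
    have h2 : |c * (d - pt)| = c * |pt - d| := by
      rw [abs_mul, abs_of_nonneg hc1, abs_sub_comm]
    rw [h1, h2]
  have hdiff : |qt / pt - c / d| ≤ (|qt - c| * d + c * |pt - d|) / (pt * d) := by
    rw [div_sub_div _ _ hpt0.ne' hd0.ne', abs_div, abs_of_pos (mul_pos hpt0 hd0)]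
    exact div_le_div₀ (add_nonneg (mul_nonneg (abs_nonneg _) hd0.le)
      (mul_nonneg hc1 (abs_nonneg _))) hnum (mul_pos hpt0 hd0) le_rfl
  calc |qt / pt - c / d| * L
      ≤ ((|qt - c| * d + c * |pt - d|) / (pt * d)) * L :=
        mul_le_mul_of_nonneg_right hdiff hL.le
    _ ≤ ((Cq / L * pM + qM * (Cp / L)) / (pm * pm)) * L := by
        refine mul_le_mul_of_nonneg_right ?_ hL.le
        refine div_le_div₀ (add_nonneg (mul_nonneg hCqL hpMpos.le) (mul_nonneg hqMnn hCpL))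
          (add_le_add (mul_le_mul hu hd2 hd0.le hCqL)
            (mul_le_mul hc2 hv (abs_nonneg _) hqMnn))
          (mul_pos hpm hpm) (mul_le_mul hpt1 hd1 hpm.le hpt0.le)
    _ = (Cq * pM + qM * Cp) / (pm * pm) := by
        field_simp

private lemma lint_compare {s : Set ℝ} (hs : MeasurableSet s) {g h : ℝ → ℝ≥0∞} {K : ℝ≥0∞}
    (hK : K ≠ ∞) (hgh : ∀ t ∈ s, g t ≤ K * h t) (hh : (∫⁻ t in s, h t) < ∞) :
    (∫⁻ t in s, g t) < ∞ := by
  have h1 : (∫⁻ t in s, g t) ≤ ∫⁻ t in s, K * h t := by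
    refine lintegral_mono_ae ?_
    filter_upwards [ae_restrict_mem hs] with t ht using hgh t ht
  rw [lintegral_const_mul' _ _ hK] at h1
  exact h1.trans_lt (ENNReal.mul_lt_top hK.lt_top hh)

private lemma rearrange_nonneg' {α : Type*} [MeasurableSpace α] (μ : Measure α)
    (f : α → ℝ) (t : ℝ) : 0 ≤ rearrange μ f t :=
  Real.sSup_nonneg fun _ hx => hx.1

/-- equivalence (2.10) ⇔ (2.11).  For `p ∈ P₀([0,∞))`, `q ∈ P₁([0,∞))`
and any measurable `f` on a σ-finite measure space `(Ω,μ)` with `μ(Ω) = ∞`: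
`∫₀^∞ t^{q(t)/p(t)−1} (f*(t))^{q(t)} dt < ∞` iff
`∫₀^1 t^{q(0)/p(0)−1} (f*(t))^{q(t)} dt + ∫₁^∞ t^{q(∞)/p(∞)−1} (f*(t))^{q(t)} dt < ∞`. -/
theorem statement3 {Ω : Type*} [MeasurableSpace Ω] (μ : Measure Ω) [SigmaFinite μ]
    (hμ : μ univ = ∞) (p q : ℝ → ℝ) (p0 pinf q0 qinf : ℝ)
    (hp : ClassPa 0 ∞ p p0 pinf) (hq : ClassPa 1 ∞ q q0 qinf)
    (f : Ω → ℝ) (hf : Measurable f) :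
    (∫⁻ t in Ioi (0 : ℝ),
        ENNReal.ofReal (t ^ (q t / p t - 1) * rearrange μ f t ^ q t) < ∞) ↔
      ((∫⁻ t in Ioo (0 : ℝ) 1,
          ENNReal.ofReal (t ^ (q0 / p0 - 1) * rearrange μ f t ^ q t)) +
        (∫⁻ t in Ioi (1 : ℝ),
          ENNReal.ofReal (t ^ (qinf / pinf - 1) * rearrange μ f t ^ q t)) < ∞) := by
  classical
  obtain ⟨hpC, pm, pM, hpm, hpb⟩ := hp
  obtain ⟨hqC, qm, qM, hqm, hqb⟩ := hq
  have hpb' : ∀ t : ℝ, 0 ≤ t → pm ≤ p t ∧ p t ≤ pM := fun t ht => hpb t ht le_top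
  have hqb' : ∀ t : ℝ, 0 ≤ t → qm ≤ q t ∧ q t ≤ qM := fun t ht => hqb t ht le_top
  have hpMpos : 0 < pM := lt_of_lt_of_le hpm ((hpb' 0 le_rfl).1.trans (hpb' 0 le_rfl).2)
  have hqMpos : 0 < qM :=
    lt_trans zero_lt_one (lt_of_lt_of_le hqm ((hqb' 0 le_rfl).1.trans (hqb' 0 le_rfl).2))
  have hp0 : pm ≤ p0 := ge_of_tendsto hpC.lim_zero
    (eventually_of_mem self_mem_nhdsWithin fun t ht => (hpb' t (le_of_lt ht)).1)
  have hp0' : p0 ≤ pM := le_of_tendsto hpC.lim_zero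
    (eventually_of_mem self_mem_nhdsWithin fun t ht => (hpb' t (le_of_lt ht)).2)
  have hpinf : pm ≤ pinf := ge_of_tendsto (hpC.lim_infty rfl)
    (eventually_atTop.mpr ⟨0, fun t ht => (hpb' t ht).1⟩)
  have hpinf' : pinf ≤ pM := le_of_tendsto (hpC.lim_infty rfl)
    (eventually_atTop.mpr ⟨0, fun t ht => (hpb' t ht).2⟩)
  have hq0 : qm ≤ q0 := ge_of_tendsto hqC.lim_zero
    (eventually_of_mem self_mem_nhdsWithin fun t ht => (hqb' t (le_of_lt ht)).1)
  have hq0' : q0 ≤ qM := le_of_tendsto hqC.lim_zero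
    (eventually_of_mem self_mem_nhdsWithin fun t ht => (hqb' t (le_of_lt ht)).2)
  have hqinf : qm ≤ qinf := ge_of_tendsto (hqC.lim_infty rfl)
    (eventually_atTop.mpr ⟨0, fun t ht => (hqb' t ht).1⟩)
  have hqinf' : qinf ≤ qM := le_of_tendsto (hqC.lim_infty rfl)
    (eventually_atTop.mpr ⟨0, fun t ht => (hqb' t ht).2⟩)
  have hq0nn : 0 ≤ q0 := le_trans (by linarith) hq0
  have hqinfnn : 0 ≤ qinf := le_trans (by linarith) hqinf
  obtain ⟨Cp, hCp, hdp⟩ := hpC.decay_zero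
  obtain ⟨Cq, hCq, hdq⟩ := hqC.decay_zero
  obtain ⟨Cp', hCp', hdp'⟩ := hpC.decay_infty rfl
  obtain ⟨Cq', hCq', hdq'⟩ := hqC.decay_infty rfl
  set D0 : ℝ := (Cq * pM + qM * Cp) / (pm * pm) with hD0def
  set Dinf : ℝ := (Cq' * pM + qM * Cp') / (pm * pm) with hDinfdef
  set A2 : ℝ := 2 * (qM / pm) with hA2def
  have hD0nn : 0 ≤ D0 := div_nonneg
    (add_nonneg (mul_nonneg hCq.le hpMpos.le) (mul_nonneg hqMpos.le hCp.le))
    (mul_nonneg hpm.le hpm.le)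
  have hDinfnn : 0 ≤ Dinf := div_nonneg
    (add_nonneg (mul_nonneg hCq'.le hpMpos.le) (mul_nonneg hqMpos.le hCp'.le))
    (mul_nonneg hpm.le hpm.le)
  have hA2nn : 0 ≤ A2 := by
    have : 0 ≤ qM / pm := div_nonneg hqMpos.le hpm.le
    linarith
  set B : ℝ := D0 + A2 + Dinf with hBdef
  -- bound near zero
  have hBzero : ∀ t ∈ Ioo (0 : ℝ) 1, |(q t / p t - q0 / p0) * Real.log t| ≤ B := by
    rintro t ⟨ht0, ht1⟩
    rw [abs_mul]
    have hlt : Real.log t < 0 := Real.log_neg ht0 ht1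
    by_cases hhalf : t ≤ 1 / 2
    · have h2t : (2 : ℝ) ≤ 1 / t := by
        rw [le_div_iff₀ ht0]; linarith
      have hL0 : 0 < Real.log (1 / t) := Real.log_pos (by linarith)
      have habs : |Real.log t| = Real.log (1 / t) := by
        rw [abs_of_neg hlt, one_div, Real.log_inv]
      rw [habs]
      have hkey := key_ratio hpm (hpb' t ht0.le).1 hp0 hp0' hq0nn hq0' hL0
        (hdq t ht0 hhalf) (hdp t ht0 hhalf)
      calc |q t / p t - q0 / p0| * Real.log (1 / t) ≤ D0 := hkey
        _ ≤ B := by rw [hBdef]; linarith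
    · push_neg at hhalf
      have hptpos : 0 < p t := lt_of_lt_of_le hpm (hpb' t ht0.le).1
      have hqtnn : 0 ≤ q t := le_trans (by linarith) (hqb' t ht0.le).1
      have hp0pos : 0 < p0 := lt_of_lt_of_le hpm hp0
      have h1 : |q t / p t - q0 / p0| ≤ A2 := by
        have ha : |q t / p t - q0 / p0| ≤ |q t / p t| + |q0 / p0| := by
          have := abs_add_le (q t / p t) (-(q0 / p0))
          simpa [sub_eq_add_neg] using this
        have hb1 : q t / p t ≤ qM / pm :=
          div_le_div₀ hqMpos.le (hqb' t ht0.le).2 hpm (hpb' t ht0.le).1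
        have hb2 : q0 / p0 ≤ qM / pm := div_le_div₀ hqMpos.le hq0' hpm hp0
        rw [abs_of_nonneg (div_nonneg hqtnn hptpos.le),
          abs_of_nonneg (div_nonneg hq0nn hp0pos.le)] at ha
        rw [hA2def]; linarith
      have h2 : |Real.log t| ≤ 1 := by
        rw [abs_of_neg hlt]
        have hlog : Real.log (1 / t) ≤ Real.log 2 :=
          Real.log_le_log (by positivity) (by rw [div_le_iff₀ ht0]; linarith)
        have hlog2 : Real.log 2 < 1 := by
          have := Real.log_two_lt_d9
          linarith
        rw [one_div, Real.log_inv] at hlog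
        linarith
      calc |q t / p t - q0 / p0| * |Real.log t| ≤ A2 * 1 :=
            mul_le_mul h1 h2 (abs_nonneg _) hA2nn
        _ ≤ B := by rw [hBdef]; linarith
  -- bound near infinity
  have hBinf : ∀ t ∈ Ioi (1 : ℝ), |(q t / p t - qinf / pinf) * Real.log t| ≤ B := by
    intro t ht
    have ht1 : (1 : ℝ) < t := ht
    have ht0 : (0 : ℝ) < t := lt_trans zero_lt_one ht1
    have he : (0 : ℝ) < Real.exp 1 := Real.exp_pos 1
    have hL0 : 0 < Real.log (Real.exp 1 + t) := Real.log_pos (by linarith)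
    have habs : |Real.log t| ≤ Real.log (Real.exp 1 + t) := by
      rw [abs_of_nonneg (Real.log_nonneg (le_of_lt ht))]
      exact Real.log_le_log ht0 (by linarith)
    have hkey := key_ratio hpm (hpb' t ht0.le).1 hpinf hpinf' hqinfnn hqinf' hL0
      (hdq' t ht0.le) (hdp' t ht0.le)
    rw [abs_mul]
    calc |q t / p t - qinf / pinf| * |Real.log t|
        ≤ |q t / p t - qinf / pinf| * Real.log (Real.exp 1 + t) :=
          mul_le_mul_of_nonneg_left habs (abs_nonneg _)
      _ ≤ Dinf := hkey
      _ ≤ B := by rw [hBdef]; linarith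
  -- pointwise comparison at the ENNReal level
  set K : ℝ≥0∞ := ENNReal.ofReal (Real.exp B) with hKdef
  have hKne : K ≠ ∞ := ENNReal.ofReal_ne_top
  have hpoint : ∀ (c t : ℝ), 0 < t → |(q t / p t - c) * Real.log t| ≤ B →
      ENNReal.ofReal (t ^ (q t / p t - 1) * rearrange μ f t ^ q t) ≤
        K * ENNReal.ofReal (t ^ (c - 1) * rearrange μ f t ^ q t) ∧
      ENNReal.ofReal (t ^ (c - 1) * rearrange μ f t ^ q t) ≤
        K * ENNReal.ofReal (t ^ (q t / p t - 1) * rearrange μ f t ^ q t) := by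
    intro c t ht hB
    have hF : 0 ≤ rearrange μ f t ^ q t := Real.rpow_nonneg (rearrange_nonneg' μ f t) _
    have h1 : t ^ (q t / p t - 1) ≤ Real.exp B * t ^ (c - 1) := by
      refine rpow_le_exp_mul ht ?_
      have he : q t / p t - 1 - (c - 1) = q t / p t - c := by ring
      rw [he]; exact hB
    have h2 : t ^ (c - 1) ≤ Real.exp B * t ^ (q t / p t - 1) := by
      refine rpow_le_exp_mul ht ?_
      have he : c - 1 - (q t / p t - 1) = -(q t / p t - c) := by ring
      rw [he, neg_mul, abs_neg]; exact hB
    constructor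
    · rw [hKdef, ← ENNReal.ofReal_mul (Real.exp_pos B).le]
      exact ENNReal.ofReal_le_ofReal
        ((mul_le_mul_of_nonneg_right h1 hF).trans_eq (mul_assoc _ _ _))
    · rw [hKdef, ← ENNReal.ofReal_mul (Real.exp_pos B).le]
      exact ENNReal.ofReal_le_ofReal
        ((mul_le_mul_of_nonneg_right h2 hF).trans_eq (mul_assoc _ _ _))
  -- splitting the integral at 1
  have hdisj : Disjoint (Ioo (0 : ℝ) 1) (Ioi (1 : ℝ)) :=
    Set.disjoint_left.mpr fun x hx hx' => absurd hx.2 (not_lt.mpr hx'.le)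
  have hae : (Ioo (0 : ℝ) 1 ∪ Ioi 1 : Set ℝ) =ᵐ[volume] Ioi (0 : ℝ) := by
    rw [MeasureTheory.ae_eq_set]
    constructor
    · refine measure_mono_null ?_ (measure_empty)
      intro x hx
      rcases hx with ⟨hx1, hx2⟩
      exact absurd (by rcases hx1 with h | h; exacts [h.1, lt_trans zero_lt_one (mem_Ioi.mp h)]) hx2
    · refine measure_mono_null ?_ (Real.volume_singleton (a := 1))
      intro x hx
      simp only [mem_diff, mem_Ioi, mem_union, mem_Ioo, not_or, not_and, not_lt,
        mem_singleton_iff] at hx ⊢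
      exact le_antisymm hx.2.2 (hx.2.1 hx.1)
  have hsplit : ∀ g : ℝ → ℝ≥0∞, (∫⁻ t in Ioi (0 : ℝ), g t) =
      (∫⁻ t in Ioo (0 : ℝ) 1, g t) + ∫⁻ t in Ioi (1 : ℝ), g t := by
    intro g
    rw [← setLIntegral_congr hae, lintegral_union measurableSet_Ioi hdisj]
  rw [hsplit (fun t => ENNReal.ofReal (t ^ (q t / p t - 1) * rearrange μ f t ^ q t)),
    ENNReal.add_lt_top, ENNReal.add_lt_top]
  constructor
  · rintro ⟨h1, h2⟩
    refine ⟨lint_compare measurableSet_Ioo hKne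
        (fun t ht => (hpoint (q0 / p0) t ht.1 (hBzero t ht)).2) h1,
      lint_compare measurableSet_Ioi hKne
        (fun t ht => (hpoint (qinf / pinf) t (lt_trans zero_lt_one ht) (hBinf t ht)).2) h2⟩
  · rintro ⟨h1, h2⟩
    refine ⟨lint_compare measurableSet_Ioo hKne
        (fun t ht => (hpoint (q0 / p0) t ht.1 (hBzero t ht)).1) h1,
      lint_compare measurableSet_Ioi hKne
        (fun t ht => (hpoint (qinf / pinf) t (lt_trans zero_lt_one ht) (hBinf t ht)).1) h2⟩


end
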